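/- arXiv:1808.07206 — 5 statements merged into one kernel-verified Lean document; each statement's English description precedes it below -/
import Mathlib

section
/- Let $\mathfrak{t}, \mathfrak{t}'$ be the quadratic forms of two nonnegative, compactly resolved, self-adjoint comparable operators $T, T'$ defined with respect to two equivalent inner products $n, n'$ on a common vector space, with $c_H n \le n' \le C_H n$ and $c_V \mathfrak{t} \le \mathfrak{t}' \le C_V \mathfrak{t}$ for positive constants. Then for every $k$ with $\lambda_k(T) \ne 0$: $\frac{c_V}{C_H} \le \frac{\lambda_k(T')}{\lambda_k(T)} \le \frac{C_V}{c_H}$. -/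
/-!
Pointwise, the Rayleigh quotients satisfy `t' u / nn' u ∈ [cV/CH, CV/cH] · (t u / nn u)`, since
`t'` and `nn'` are squeezed between positive multiples of `t` and `nn`. Multiplication by a
nonnegative constant commutes with `⨆` and `⨅` over ℝ, so this two-sided bound survives the
supremum over each trial subspace and then the infimum over all trial subspaces of the min-max
formula; dividing by `λ_k(T) > 0` gives the bound on the ratio.
-/

/-- The `k`-th min-max eigenvalue of the quadratic form `t` with respect to the
squared-norm functional `nn`, over the form domain `V`. -/
noncomputable def minmaxRQ {H : Type*} [AddCommGroup H] [Module ℝ H]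
    (t nn : H → ℝ) (V : Submodule ℝ H) (k : ℕ) : ℝ :=
  ⨅ W : {W : Submodule ℝ H // W ≤ V ∧ Module.finrank ℝ W = k + 1},
    ⨆ u : {u : H // u ∈ (W : Submodule ℝ H) ∧ u ≠ 0}, t (u : H) / nn (u : H)

open Set

theorem div_mem_Icc_mul_div {x x' y y' cx Cx cy Cy : ℝ} (hx : 0 ≤ x) (hy : 0 < y)
    (hcx : 0 ≤ cx) (hcy : 0 < cy) (hx' : x' ∈ Icc (cx * x) (Cx * x))
    (hy' : y' ∈ Icc (cy * y) (Cy * y)) :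
    x' / y' ∈ Icc (cx / Cy * (x / y)) (Cx / cy * (x / y)) := by
  have hx'_nonneg : 0 ≤ x' := (mul_nonneg hcx hx).trans hx'.1
  have hy'_pos : 0 < y' := (mul_pos hcy hy).trans_le hy'.1
  rw [div_mul_div_comm, div_mul_div_comm]
  exact ⟨div_le_div₀ hx'_nonneg hx'.1 hy'_pos hy'.2,
    div_le_div₀ (hx'_nonneg.trans hx'.2) hx'.2 (mul_pos hcy hy) hy'.1⟩

namespace Real

variable {ι : Sort*} {f g : ι → ℝ} {a b : ℝ}

theorem iSup_mem_Icc_mul_iSup (hb : 0 < b) (ha : 0 ≤ a)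
    (hfg : ∀ i, f i ∈ Icc (b * g i) (a * g i)) :
    ⨆ i, f i ∈ Icc (b * ⨆ i, g i) (a * ⨆ i, g i) := by
  by_cases hg : BddAbove (range g)
  · obtain ⟨M, hM⟩ := hg
    have hag_le : ∀ i, a * g i ≤ a * M := fun i =>
      mul_le_mul_of_nonneg_left (hM (mem_range_self i)) ha
    have hf : BddAbove (range f) :=
      ⟨a * M, forall_mem_range.2 fun i => (hfg i).2.trans (hag_le i)⟩
    rw [mul_iSup_of_nonneg hb.le, mul_iSup_of_nonneg ha]
    exact ⟨ciSup_mono hf fun i => (hfg i).1,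
      ciSup_mono ⟨a * M, forall_mem_range.2 hag_le⟩ fun i => (hfg i).2⟩
  · have hf : ¬BddAbove (range f) := fun ⟨M, hM⟩ =>
      hg ⟨M / b, forall_mem_range.2 fun i =>
        (le_div_iff₀' hb).2 ((hfg i).1.trans (hM (mem_range_self i)))⟩
    simp [iSup_of_not_bddAbove hg, iSup_of_not_bddAbove hf]

theorem iInf_mem_Icc_mul_iInf (hb : 0 ≤ b) (ha : 0 ≤ a) (hg : ∀ i, 0 ≤ g i)
    (hfg : ∀ i, f i ∈ Icc (b * g i) (a * g i)) :
    ⨅ i, f i ∈ Icc (b * ⨅ i, g i) (a * ⨅ i, g i) := by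
  have hbg : ∀ i, 0 ≤ b * g i := fun i => mul_nonneg hb (hg i)
  rw [mul_iInf_of_nonneg hb, mul_iInf_of_nonneg ha]
  exact ⟨ciInf_mono ⟨0, forall_mem_range.2 hbg⟩ fun i => (hfg i).1,
    ciInf_mono ⟨0, forall_mem_range.2 fun i => (hbg i).trans (hfg i).1⟩ fun i => (hfg i).2⟩

end Real

section MinMax

variable {H : Type*} [AddCommGroup H] [Module ℝ H] {t t' nn nn' : H → ℝ}

theorem iSup_rayleigh_nonneg (ht : ∀ u, 0 ≤ t u) (hn : ∀ u, u ≠ 0 → 0 < nn u)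
    (W : Submodule ℝ H) : 0 ≤ ⨆ u : {u : H // u ∈ W ∧ u ≠ 0}, t (u : H) / nn (u : H) :=
  Real.iSup_nonneg fun u => div_nonneg (ht u) (hn u u.2.2).le

theorem minmaxRQ_nonneg (ht : ∀ u, 0 ≤ t u) (hn : ∀ u, u ≠ 0 → 0 < nn u)
    (V : Submodule ℝ H) (k : ℕ) : 0 ≤ minmaxRQ t nn V k :=
  Real.iInf_nonneg fun W => iSup_rayleigh_nonneg ht hn W.1

theorem minmaxRQ_mem_Icc_mul_minmaxRQ {cH CH cV CV : ℝ} (hcH : 0 < cH) (hCH : 0 < CH)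
    (hcV : 0 < cV) (hCV : 0 ≤ CV)
    (hn : ∀ u, nn' u ∈ Icc (cH * nn u) (CH * nn u)) (ht : ∀ u, t' u ∈ Icc (cV * t u) (CV * t u))
    (hnpos : ∀ u, u ≠ 0 → 0 < nn u) (htpos : ∀ u, 0 ≤ t u) (V : Submodule ℝ H) (k : ℕ) :
    minmaxRQ t' nn' V k ∈
      Icc (cV / CH * minmaxRQ t nn V k) (CV / cH * minmaxRQ t nn V k) :=
  Real.iInf_mem_Icc_mul_iInf (div_pos hcV hCH).le (div_nonneg hCV hcH.le)
    (fun W => iSup_rayleigh_nonneg htpos hnpos W.1)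
    fun _ => Real.iSup_mem_Icc_mul_iSup (div_pos hcV hCH) (div_nonneg hCV hcH.le) fun u =>
      div_mem_Icc_mul_div (htpos u) (hnpos u u.2.2) hcV.le hcH (ht u) (hn u)

end MinMax

/-- Spectral comparison of comparable operators: `c_V/C_H ≤ λ'_k/λ_k ≤ C_V/c_H`. -/
theorem stmt10 {H : Type*} [AddCommGroup H] [Module ℝ H]
    (t t' nn nn' : H → ℝ) (V : Submodule ℝ H)
    (cH CH cV CV : ℝ) (hcH : 0 < cH) (hCH : 0 < CH) (hcV : 0 < cV) (hCV : 0 < CV)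
    (hn : ∀ u : H, cH * nn u ≤ nn' u ∧ nn' u ≤ CH * nn u)
    (ht : ∀ u : H, cV * t u ≤ t' u ∧ t' u ≤ CV * t u)
    (hnpos : ∀ u : H, u ≠ 0 → 0 < nn u)
    (htpos : ∀ u : H, 0 ≤ t u)
    (k : ℕ) (hk : minmaxRQ t nn V k ≠ 0) :
    cV / CH ≤ minmaxRQ t' nn' V k / minmaxRQ t nn V k ∧
      minmaxRQ t' nn' V k / minmaxRQ t nn V k ≤ CV / cH := by
  have hpos : 0 < minmaxRQ t nn V k := (minmaxRQ_nonneg htpos hnpos V k).lt_of_ne' hk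
  obtain ⟨hlower, hupper⟩ :=
    minmaxRQ_mem_Icc_mul_minmaxRQ hcH hCH hcV hCV.le hn ht hnpos htpos V k
  exact ⟨(le_div_iff₀ hpos).2 hlower, (div_le_iff₀ hpos).2 hupper⟩
end

section
/- Let $a_1, \ldots, a_n > 0$ and let $N_0(\lambda)$ denote the number of $n$-tuples $(i_1, \ldots, i_n)$ of positive integers with $\sum_j (i_j \pi / a_j)^2 \le \lambda$. Let $d$ satisfy $d^2 = \sum_j \pi^2/a_j^2$, let $|R| = \prod_j a_j$, and let $\omega_n$ be the volume of the unit ball in $\mathbb{R}^n$. Then for all $\lambda \ge d^2$: $\frac{\omega_n |R|}{(2\pi)^n}\left(1 - \frac{d}{\sqrt{\lambda}}\right)^n \lambda^{n/2} \le N_0(\lambda) \le \frac{\omega_n |R|}{(2\pi)^n} \lambda^{n/2}$. -/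
/-!
With `t_j = π / a_j` and `R = √λ`, `N₀(λ)` counts the points `i ∈ ℕ_{≥1}ⁿ` with
`‖(i_j t_j)_j‖ ≤ R`. Send `x ∈ ℝⁿ` to `i_j = ⌊|x_j| / t_j⌋ + 1`: the fibre over `i` consists of
`2ⁿ` boxes of volume `∏ t_j`, on which `|x_j| < i_j t_j ≤ |x_j| + t_j`. So the preimage of the
counted set has volume `2ⁿ N₀(λ) ∏ t_j`, lies in the closed ball of radius `R`, and, by the
triangle inequality, contains the closed ball of radius `R - ‖t‖ = √λ - d`.
-/

open MeasureTheory Metric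

lemma volume_setOf_natFloor_abs_div_add_one_eq {c : ℝ} (hc : 0 < c) {m : ℕ} (hm : 1 ≤ m) :
    volume {x : ℝ | ⌊|x| / c⌋₊ + 1 = m} = ENNReal.ofReal (2 * c) := by
  obtain ⟨k, rfl⟩ : ∃ k, m = k + 1 := ⟨m - 1, by omega⟩
  have hshell : {x : ℝ | ⌊|x| / c⌋₊ + 1 = k + 1} = ball 0 ((k + 1) * c) \ ball 0 (k * c) := by
    ext x
    simp only [Set.mem_ofPred_eq, Set.mem_sdiff, mem_ball, dist_zero_right, Real.norm_eq_abs,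
      not_lt, add_left_inj]
    rw [Nat.floor_eq_iff (by positivity), le_div_iff₀ hc, div_lt_iff₀ hc, and_comm]
  rw [hshell, measure_sdiff (ball_subset_ball (by gcongr; linarith))
      measurableSet_ball.nullMeasurableSet measure_ball_lt_top.ne,
    Real.volume_ball, Real.volume_ball, ← ENNReal.ofReal_sub _ (by positivity)]
  congr 1
  ring

section Grid

variable {ι : Type*}

noncomputable def gridIndex (t x : EuclideanSpace ℝ ι) : ι → ℕ := fun j => ⌊|x j| / t j⌋₊ + 1

def positiveGridPoints [Fintype ι] (t : EuclideanSpace ℝ ι) (R : ℝ) : Set (ι → ℕ) :=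
  {i | (∀ j, 1 ≤ i j) ∧ ∑ j, (i j * t j) ^ 2 ≤ R ^ 2}

lemma abs_lt_gridIndex_mul {t : EuclideanSpace ℝ ι} (ht : ∀ j, 0 < t j) (x : EuclideanSpace ℝ ι)
    (j : ι) : |x j| < gridIndex t x j * t j := by
  rw [← div_lt_iff₀ (ht j)]
  exact_mod_cast Nat.lt_floor_add_one _

lemma gridIndex_mul_le {t : EuclideanSpace ℝ ι} (ht : ∀ j, 0 < t j) (x : EuclideanSpace ℝ ι)
    (j : ι) : gridIndex t x j * t j ≤ |x j| + t j := by
  have hfloor : (⌊|x j| / t j⌋₊ : ℝ) * t j ≤ |x j| :=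
    (le_div_iff₀ (ht j)).1 (Nat.floor_le (div_nonneg (abs_nonneg _) (ht j).le))
  simp only [gridIndex, Nat.cast_add, Nat.cast_one]
  linarith

variable [Fintype ι]

lemma volume_gridIndex_preimage_singleton {t : EuclideanSpace ℝ ι} (ht : ∀ j, 0 < t j)
    {i : ι → ℕ} (hi : ∀ j, 1 ≤ i j) :
    volume (gridIndex t ⁻¹' {i}) = ∏ j, ENNReal.ofReal (2 * t j) := by
  have hbox : gridIndex t ⁻¹' {i} =
      WithLp.ofLp ⁻¹' Set.univ.pi fun j => {y : ℝ | ⌊|y| / t j⌋₊ + 1 = i j} := by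
    ext x
    simp [gridIndex, funext_iff]
  have hmeas : MeasurableSet (Set.univ.pi fun j => {y : ℝ | ⌊|y| / t j⌋₊ + 1 = i j}) :=
    .univ_pi fun j => measurableSet_eq_fun (by fun_prop) measurable_const
  rw [hbox, (PiLp.volume_preserving_ofLp ι).measure_preimage hmeas.nullMeasurableSet,
    volume_pi_pi]
  exact Finset.prod_congr rfl fun j _ => volume_setOf_natFloor_abs_div_add_one_eq (ht j) (hi j)

lemma volume_gridIndex_preimage {t : EuclideanSpace ℝ ι} (ht : ∀ j, 0 < t j)
    {S : Set (ι → ℕ)} (hS : ∀ i ∈ S, ∀ j, 1 ≤ i j) :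
    volume (gridIndex t ⁻¹' S) = S.encard * ∏ j, ENNReal.ofReal (2 * t j) := by
  have hmeas : Measurable (gridIndex t) := by unfold gridIndex; fun_prop
  rw [← tsum_measure_preimage_singleton S.to_countable
      fun i _ => hmeas (measurableSet_singleton i), ← ENNReal.tsum_set_const]
  exact tsum_congr fun i => volume_gridIndex_preimage_singleton ht (hS i i.2)

lemma gridIndex_preimage_positiveGridPoints_subset {t : EuclideanSpace ℝ ι} (ht : ∀ j, 0 < t j)
    {R : ℝ} (hR : 0 ≤ R) : gridIndex t ⁻¹' positiveGridPoints t R ⊆ closedBall 0 R := by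
  intro x hx
  rw [mem_closedBall_zero_iff, ← pow_le_pow_iff_left₀ (norm_nonneg x) hR two_ne_zero,
    EuclideanSpace.real_norm_sq_eq]
  refine le_trans (Finset.sum_le_sum fun j _ => ?_) hx.2
  rw [← sq_abs (x j)]
  exact pow_le_pow_left₀ (abs_nonneg _) (abs_lt_gridIndex_mul ht x j).le 2

lemma closedBall_subset_gridIndex_preimage_positiveGridPoints {t : EuclideanSpace ℝ ι}
    (ht : ∀ j, 0 < t j) (R : ℝ) :
    closedBall 0 (R - ‖t‖) ⊆ gridIndex t ⁻¹' positiveGridPoints t R := by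
  intro x hx
  refine ⟨fun j => Nat.le_add_left 1 _, ?_⟩
  set u : EuclideanSpace ℝ ι := WithLp.toLp 2 fun j => |x j|
  have hu : ‖u‖ = ‖x‖ := by simp [u, EuclideanSpace.norm_eq]
  have hut : ‖u + t‖ ≤ R := by
    rw [mem_closedBall_zero_iff] at hx
    linarith [norm_add_le u t]
  calc ∑ j, (gridIndex t x j * t j : ℝ) ^ 2 ≤ ∑ j, (u + t) j ^ 2 :=
        Finset.sum_le_sum fun j _ => pow_le_pow_left₀ (by have := ht j; positivity)
          (gridIndex_mul_le ht x j) 2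
    _ = ‖u + t‖ ^ 2 := (EuclideanSpace.real_norm_sq_eq _).symm
    _ ≤ R ^ 2 := pow_le_pow_left₀ (norm_nonneg _) hut 2

theorem encard_positiveGridPoints_mul_le {t : EuclideanSpace ℝ ι} (ht : ∀ j, 0 < t j)
    {R : ℝ} (hR : 0 ≤ R) :
    (positiveGridPoints t R).encard * ∏ j, ENNReal.ofReal (2 * t j) ≤
      volume (closedBall (0 : EuclideanSpace ℝ ι) R) := by
  rw [← volume_gridIndex_preimage ht fun i hi => hi.1]
  exact measure_mono (gridIndex_preimage_positiveGridPoints_subset ht hR)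

theorem volume_closedBall_le_encard_positiveGridPoints_mul {t : EuclideanSpace ℝ ι}
    (ht : ∀ j, 0 < t j) (R : ℝ) :
    volume (closedBall (0 : EuclideanSpace ℝ ι) (R - ‖t‖)) ≤
      (positiveGridPoints t R).encard * ∏ j, ENNReal.ofReal (2 * t j) := by
  rw [← volume_gridIndex_preimage ht fun i hi => hi.1]
  exact measure_mono (closedBall_subset_gridIndex_preimage_positiveGridPoints ht R)

theorem positiveGridPoints_finite {t : EuclideanSpace ℝ ι} (ht : ∀ j, 0 < t j) {R : ℝ}
    (hR : 0 ≤ R) : (positiveGridPoints t R).Finite := by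
  have hprod : ∏ j, ENNReal.ofReal (2 * t j) ≠ 0 :=
    Finset.prod_ne_zero_iff.2 fun j _ => by have := ht j; positivity
  rw [← Set.encard_lt_top_iff, ← ENat.toENNReal_lt_top]
  exact ENNReal.lt_top_of_mul_ne_top_left
    ((encard_positiveGridPoints_mul_le ht hR).trans_lt measure_closedBall_lt_top).ne hprod

lemma encard_positiveGridPoints_mul_eq_ofReal {t : EuclideanSpace ℝ ι} (ht : ∀ j, 0 < t j)
    {R : ℝ} (hR : 0 ≤ R) :
    (positiveGridPoints t R).encard * ∏ j, ENNReal.ofReal (2 * t j) =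
      ENNReal.ofReal ((positiveGridPoints t R).ncard * ∏ j, 2 * t j) := by
  rw [← (positiveGridPoints_finite ht hR).cast_ncard_eq, ENNReal.ofReal_mul (by positivity),
    ENNReal.ofReal_prod_of_nonneg fun j _ => by have := ht j; positivity, ENNReal.ofReal_natCast]
  rfl

theorem ncard_positiveGridPoints_mul_le {t : EuclideanSpace ℝ ι} (ht : ∀ j, 0 < t j) {R : ℝ}
    (hR : 0 ≤ R) :
    (positiveGridPoints t R).ncard * ∏ j, 2 * t j ≤
      R ^ Fintype.card ι * volume.real (ball (0 : EuclideanSpace ℝ ι) 1) := by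
  have hprod : 0 ≤ ∏ j, 2 * t j := Finset.prod_nonneg fun j _ => by have := ht j; positivity
  have h := ENNReal.toReal_mono measure_closedBall_lt_top.ne
    (encard_positiveGridPoints_mul_le ht hR)
  rwa [encard_positiveGridPoints_mul_eq_ofReal ht hR, ENNReal.toReal_ofReal (by positivity),
    ← measureReal_def, Measure.addHaar_real_closedBall _ _ hR, finrank_euclideanSpace] at h

theorem le_ncard_positiveGridPoints_mul {t : EuclideanSpace ℝ ι} (ht : ∀ j, 0 < t j) {R : ℝ}
    (hR : ‖t‖ ≤ R) :
    (R - ‖t‖) ^ Fintype.card ι * volume.real (ball (0 : EuclideanSpace ℝ ι) 1) ≤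
      (positiveGridPoints t R).ncard * ∏ j, 2 * t j := by
  have hR0 : 0 ≤ R := (norm_nonneg t).trans hR
  have hprod : 0 ≤ ∏ j, 2 * t j := Finset.prod_nonneg fun j _ => by have := ht j; positivity
  have h := volume_closedBall_le_encard_positiveGridPoints_mul ht R
  rw [encard_positiveGridPoints_mul_eq_ofReal ht hR0] at h
  replace h := ENNReal.toReal_mono ENNReal.ofReal_ne_top h
  rwa [ENNReal.toReal_ofReal (by positivity), ← measureReal_def,
    Measure.addHaar_real_closedBall _ _ (sub_nonneg.2 hR), finrank_euclideanSpace] at h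

lemma natCard_setOf_sum_sq_le_eq_ncard_positiveGridPoints (a : ι → ℝ) {lam : ℝ} (hlam : 0 ≤ lam) :
    Nat.card {i : ι → ℕ // (∀ j, 1 ≤ i j) ∧ ∑ j, ((i j : ℝ) * Real.pi / a j) ^ 2 ≤ lam} =
      (positiveGridPoints (WithLp.toLp 2 fun j => Real.pi / a j) √lam).ncard := by
  rw [← Nat.card_coe_set_eq]
  simp only [positiveGridPoints, Real.sq_sqrt hlam, mul_div_assoc]
  rfl

end Grid

/-- Quantitative Weyl law for the Dirichlet counting function of a rectangular box. -/
theorem stmt11 (n : ℕ) (hn : 1 ≤ n) (a : Fin n → ℝ) (ha : ∀ j, 0 < a j)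
    (d : ℝ) (hd0 : 0 ≤ d) (hd : d ^ 2 = ∑ j, Real.pi ^ 2 / a j ^ 2)
    (ω : ℝ) (hω : ω = (volume (Metric.ball (0 : EuclideanSpace ℝ (Fin n)) 1)).toReal)
    (N0 : ℝ → ℕ)
    (hN0 : ∀ lam : ℝ, N0 lam = Nat.card
      {i : Fin n → ℕ // (∀ j, 1 ≤ i j) ∧ ∑ j, ((i j : ℝ) * Real.pi / a j) ^ 2 ≤ lam})
    (lam : ℝ) (hlam : d ^ 2 ≤ lam) :
    ω * (∏ j, a j) / (2 * Real.pi) ^ n * (1 - d / Real.sqrt lam) ^ n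
        * lam ^ ((n : ℝ) / 2) ≤ (N0 lam : ℝ) ∧
      (N0 lam : ℝ) ≤ ω * (∏ j, a j) / (2 * Real.pi) ^ n * lam ^ ((n : ℝ) / 2) := by
  have hlam0 : 0 < lam := lt_of_lt_of_le
    (hd ▸ Finset.sum_pos (fun j _ => by have := ha j; positivity) ⟨⟨0, hn⟩, Finset.mem_univ _⟩) hlam
  set t : EuclideanSpace ℝ (Fin n) := WithLp.toLp 2 fun j => Real.pi / a j
  have ht : ∀ j, 0 < t j := fun j => div_pos Real.pi_pos (ha j)
  have htnorm : ‖t‖ = d := by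
    rw [← sq_eq_sq₀ (norm_nonneg t) hd0, EuclideanSpace.real_norm_sq_eq, hd]
    simp only [t, div_pow]
  have hN : N0 lam = (positiveGridPoints t √lam).ncard :=
    (hN0 lam).trans (natCard_setOf_sum_sq_le_eq_ncard_positiveGridPoints a hlam0.le)
  have hprod : ∏ j, 2 * t j = (2 * Real.pi) ^ n / ∏ j, a j := by
    simp only [t, mul_div_assoc', Finset.prod_div_distrib, Finset.prod_const, Finset.card_univ,
      Fintype.card_fin]
  have hpow : lam ^ ((n : ℝ) / 2) = √lam ^ n := by
    rw [Real.rpow_div_two_eq_sqrt _ hlam0.le, Real.rpow_natCast]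
  have hR : ‖t‖ ≤ √lam := htnorm ▸ Real.le_sqrt_of_sq_le hlam
  have hlower := le_ncard_positiveGridPoints_mul ht hR
  have hupper := ncard_positiveGridPoints_mul_le ht (Real.sqrt_nonneg lam)
  rw [← measureReal_def] at hω
  rw [hprod, Fintype.card_fin, ← hω, ← hN, htnorm] at hlower
  rw [hprod, Fintype.card_fin, ← hω, ← hN] at hupper
  have hP : 0 < (2 * Real.pi) ^ n / ∏ j, a j := by
    have : 0 < ∏ j, a j := Finset.prod_pos fun j _ => ha j
    positivity
  have hsqrt : 0 < √lam := Real.sqrt_pos.2 hlam0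
  rw [hpow]
  constructor
  · refine Eq.trans_le ?_ ((div_le_iff₀ hP).2 hlower)
    rw [one_sub_div hsqrt.ne', div_pow]
    field_simp
  · refine ((le_div_iff₀ hP).2 hupper).trans_eq ?_
    field_simp
end

section
/- Let $R$ and $R'$ be $n$-dimensional rectangular boxes with volumes $|R| < |R'|$ and codiagonals $d, d'$ (where the codiagonal of a box with sides $a_j$ satisfies $d^2 = \sum_j \pi^2/a_j^2$). Set $\lambda_0 = (d')^2\big(1 - (|R|/|R'|)^{1/n}\big)^{-2}$. Then for all $\lambda > \lambda_0$, the Dirichlet counting function of $R$ is at most the Dirichlet counting function of $R'$: $N_0^R(\lambda) \le N_0^{R'}(\lambda)$. -/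
/-!
Both counts are compared with the volume of the positive orthant of a ball. The cells
`∏ⱼ ((iⱼ - 1) π / aⱼ, iⱼ π / aⱼ]` of the lattice points counted for `R` are disjoint and lie in
the orthant ball of radius `√λ`, while those for `R'` cover the orthant ball of radius `√λ - d'`,
because rounding a point up to the lattice moves it by at most the cell diagonal `d'`. Shrinking
the radius by the factor `s = 1 - d' / √λ` multiplies the volume by `sⁿ`, and `λ > λ₀` says
exactly that `|R| / |R'| < sⁿ`, i.e. that a cell for `R'` has at most `sⁿ` times the volume of a
cell for `R`.
-/

open MeasureTheory Set ENNReal Pointwise Function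

namespace DirichletBox

variable {ι : Type*}

def cell (c : ι → ℝ) (i : ι → ℕ) : Set (ι → ℝ) :=
  univ.pi fun j => Ioc (((i j : ℝ) - 1) * c j) ((i j : ℝ) * c j)

lemma mem_cell_iff {c : ι → ℝ} (hc : ∀ j, 0 < c j) {i : ι → ℕ} {x : ι → ℝ} :
    x ∈ cell c i ↔ ∀ j, ⌈x j / c j⌉ = i j := by
  simp only [cell, mem_univ_pi, mem_Ioc, Int.ceil_eq_iff, Int.cast_natCast]
  refine forall_congr' fun j => ?_
  rw [lt_div_iff₀ (hc j), div_le_iff₀ (hc j)]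

lemma pairwise_disjoint_cell {c : ι → ℝ} (hc : ∀ j, 0 < c j) :
    Pairwise (Disjoint on (cell c)) := by
  intro i k hik
  refine disjoint_left.2 fun x hi hk => hik (funext fun j => ?_)
  exact_mod_cast ((mem_cell_iff hc).1 hi j).symm.trans ((mem_cell_iff hc).1 hk j)

variable [Fintype ι]

def dirichletIndices (c : ι → ℝ) (lam : ℝ) : Set (ι → ℕ) :=
  {i | (∀ j, 1 ≤ i j) ∧ ∑ j, ((i j : ℝ) * c j) ^ 2 ≤ lam}

def orthantBall (ι : Type*) [Fintype ι] (ρ : ℝ) : Set (ι → ℝ) :=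
  {x | (∀ j, 0 < x j) ∧ ∑ j, x j ^ 2 ≤ ρ ^ 2}

lemma sum_sq_le_sq_iff_norm_toLp_le (x : ι → ℝ) {ρ : ℝ} (hρ : 0 ≤ ρ) :
    ∑ j, x j ^ 2 ≤ ρ ^ 2 ↔ ‖(WithLp.toLp 2 x : EuclideanSpace ℝ ι)‖ ≤ ρ := by
  rw [← sq_le_sq₀ (norm_nonneg _) hρ, EuclideanSpace.norm_sq_eq]
  simp only [Real.norm_eq_abs, sq_abs]

lemma norm_toLp_le_of_abs_le {x y : ι → ℝ} (h : ∀ j, |x j| ≤ |y j|) :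
    ‖(WithLp.toLp 2 x : EuclideanSpace ℝ ι)‖ ≤ ‖(WithLp.toLp 2 y : EuclideanSpace ℝ ι)‖ := by
  simp only [EuclideanSpace.norm_eq, Real.norm_eq_abs]
  exact Real.sqrt_le_sqrt (Finset.sum_le_sum fun j _ => pow_le_pow_left₀ (abs_nonneg _) (h j) 2)

lemma finite_dirichletIndices {c : ι → ℝ} (hc : ∀ j, 0 < c j) (lam : ℝ) :
    (dirichletIndices c lam).Finite := by
  refine (Finite.pi fun j => finite_Iic ⌊√lam / c j⌋₊).subset ?_
  rintro i ⟨-, hi⟩ j -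
  have hsq : ((i j : ℝ) * c j) ^ 2 ≤ lam :=
    (Finset.single_le_sum (fun k _ => sq_nonneg ((i k : ℝ) * c k)) (Finset.mem_univ j)).trans hi
  have : (i j : ℝ) * c j ≤ √lam := (le_abs_self _).trans (Real.abs_le_sqrt hsq)
  exact Nat.le_floor ((le_div_iff₀ (hc j)).2 this)

lemma volume_cell {c : ι → ℝ} (hc : ∀ j, 0 ≤ c j) (i : ι → ℕ) :
    volume (cell c i) = ENNReal.ofReal (∏ j, c j) := by
  rw [cell, volume_pi_pi, ENNReal.ofReal_prod_of_nonneg fun j _ => hc j]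
  refine Finset.prod_congr rfl fun j _ => ?_
  rw [Real.volume_Ioc]
  ring_nf

lemma volume_biUnion_cell {c : ι → ℝ} (hc : ∀ j, 0 < c j) {S : Set (ι → ℕ)} (hS : S.Finite) :
    volume (⋃ i ∈ S, cell c i) = S.ncard * ENNReal.ofReal (∏ j, c j) := by
  lift S to Finset (ι → ℕ) using hS
  rw [Finset.set_biUnion_coe,
    measure_biUnion_finset (fun i _ k _ hik => pairwise_disjoint_cell hc hik)
      (fun i _ => MeasurableSet.univ_pi fun _ => measurableSet_Ioc), ncard_coe_finset]
  simp [volume_cell fun j => (hc j).le]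

lemma cell_subset_orthantBall {c : ι → ℝ} (hc : ∀ j, 0 < c j) {r : ℝ} {i : ι → ℕ}
    (hi : i ∈ dirichletIndices c (r ^ 2)) : cell c i ⊆ orthantBall ι r := by
  intro x hx
  have hbounds : ∀ j, 0 < x j ∧ x j ≤ i j * c j := fun j => by
    have hxj := hx j (mem_univ j)
    have hij : (1 : ℝ) ≤ i j := by exact_mod_cast hi.1 j
    exact ⟨(mul_nonneg (sub_nonneg.2 hij) (hc j).le).trans_lt hxj.1, hxj.2⟩
  refine ⟨fun j => (hbounds j).1, le_trans ?_ hi.2⟩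
  gcongr with j
  exacts [(hbounds j).1.le, (hbounds j).2]

lemma orthantBall_subset_biUnion_cell {c : ι → ℝ} (hc : ∀ j, 0 < c j) {ρ : ℝ} (hρ : 0 ≤ ρ) :
    orthantBall ι ρ ⊆
      ⋃ i ∈ dirichletIndices c ((ρ + ‖(WithLp.toLp 2 c : EuclideanSpace ℝ ι)‖) ^ 2),
        cell c i := by
  rintro x ⟨hx0, hxρ⟩
  set i : ι → ℕ := fun j => ⌈x j / c j⌉₊
  have hxi : x ∈ cell c i :=
    (mem_cell_iff hc).2 fun j => (Int.natCast_ceil_eq_ceil (div_pos (hx0 j) (hc j)).le).symm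
  have hgap : ∀ j, |(i j : ℝ) * c j - x j| ≤ |c j| := fun j => by
    have hxj := hxi j (mem_univ j)
    rw [abs_of_nonneg (sub_nonneg.2 hxj.2), abs_of_pos (hc j)]
    linarith [hxj.1]
  refine mem_biUnion ⟨fun j => Nat.ceil_pos.2 (div_pos (hx0 j) (hc j)), ?_⟩ hxi
  refine (sum_sq_le_sq_iff_norm_toLp_le (fun j => (i j : ℝ) * c j) (by positivity)).2 ?_
  calc ‖(WithLp.toLp 2 (fun j => (i j : ℝ) * c j) : EuclideanSpace ℝ ι)‖
      = ‖WithLp.toLp 2 x + WithLp.toLp 2 (fun j => (i j : ℝ) * c j - x j)‖ := by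
        rw [← WithLp.toLp_add]
        congr with j
        simp
    _ ≤ ρ + ‖(WithLp.toLp 2 c : EuclideanSpace ℝ ι)‖ :=
        (norm_add_le _ _).trans (add_le_add ((sum_sq_le_sq_iff_norm_toLp_le x hρ).1 hxρ)
          (norm_toLp_le_of_abs_le hgap))

lemma ncard_mul_le_volume_orthantBall {c : ι → ℝ} (hc : ∀ j, 0 < c j) (r : ℝ) :
    (dirichletIndices c (r ^ 2)).ncard * ENNReal.ofReal (∏ j, c j) ≤
      volume (orthantBall ι r) := by
  rw [← volume_biUnion_cell hc (finite_dirichletIndices hc _)]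
  exact measure_mono (iUnion₂_subset fun i hi => cell_subset_orthantBall hc hi)

lemma volume_orthantBall_le_ncard_mul {c : ι → ℝ} (hc : ∀ j, 0 < c j) {ρ : ℝ} (hρ : 0 ≤ ρ) :
    volume (orthantBall ι ρ) ≤
      (dirichletIndices c ((ρ + ‖(WithLp.toLp 2 c : EuclideanSpace ℝ ι)‖) ^ 2)).ncard *
        ENNReal.ofReal (∏ j, c j) := by
  rw [← volume_biUnion_cell hc (finite_dirichletIndices hc _)]
  exact measure_mono (orthantBall_subset_biUnion_cell hc hρ)

lemma smul_orthantBall {s : ℝ} (hs : 0 < s) (ρ : ℝ) :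
    s • orthantBall ι ρ = orthantBall ι (s * ρ) := by
  ext x
  have hsum : ∑ j, (s⁻¹ * x j) ^ 2 = (s ^ 2)⁻¹ * ∑ j, x j ^ 2 := by
    simp_rw [Finset.mul_sum, mul_pow, inv_pow]
  simp only [mem_smul_set_iff_inv_smul_mem₀ hs.ne', orthantBall, mem_ofPred_eq, Pi.smul_apply,
    smul_eq_mul, mul_pos_iff_of_pos_left (inv_pos.2 hs)]
  rw [hsum, inv_mul_le_iff₀ (pow_pos hs 2), mul_pow]

lemma volume_orthantBall_mul {s : ℝ} (hs : 0 < s) (ρ : ℝ) :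
    volume (orthantBall ι (s * ρ)) =
      ENNReal.ofReal s ^ Fintype.card ι * volume (orthantBall ι ρ) := by
  rw [← smul_orthantBall hs, Measure.addHaar_smul, Module.finrank_fintype_fun_eq_card,
    abs_of_pos (pow_pos hs _), ENNReal.ofReal_pow hs.le]

theorem ncard_dirichletIndices_le_of_prod_le {c c' : ι → ℝ} (hc : ∀ j, 0 < c j)
    (hc' : ∀ j, 0 < c' j) {r : ℝ} (hr : ‖(WithLp.toLp 2 c' : EuclideanSpace ℝ ι)‖ < r)
    (hprod : ∏ j, c' j ≤
      (∏ j, c j) * ((r - ‖(WithLp.toLp 2 c' : EuclideanSpace ℝ ι)‖) / r) ^ Fintype.card ι) :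
    (dirichletIndices c (r ^ 2)).ncard ≤ (dirichletIndices c' (r ^ 2)).ncard := by
  set ρ := r - ‖(WithLp.toLp 2 c' : EuclideanSpace ℝ ι)‖
  have hρ : 0 < ρ := sub_pos.2 hr
  have hr0 : 0 < r := (norm_nonneg _).trans_lt hr
  have hs : 0 < ρ / r := div_pos hρ hr0
  set K := ENNReal.ofReal ((∏ j, c j) * (ρ / r) ^ Fintype.card ι)
  have hK : K ≠ 0 :=
    (ENNReal.ofReal_pos.2 (mul_pos (Finset.prod_pos fun j _ => hc j) (pow_pos hs _))).ne'
  suffices h : ((dirichletIndices c (r ^ 2)).ncard : ℝ≥0∞) * K ≤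
      (dirichletIndices c' (r ^ 2)).ncard * K by
    exact_mod_cast (ENNReal.mul_le_mul_iff_left hK ENNReal.ofReal_ne_top).1 h
  calc ((dirichletIndices c (r ^ 2)).ncard : ℝ≥0∞) * K
      = ENNReal.ofReal (ρ / r) ^ Fintype.card ι *
          ((dirichletIndices c (r ^ 2)).ncard * ENNReal.ofReal (∏ j, c j)) := by
        simp only [K]
        rw [ENNReal.ofReal_mul (Finset.prod_nonneg fun j _ => (hc j).le),
          ENNReal.ofReal_pow hs.le]
        ring
    _ ≤ ENNReal.ofReal (ρ / r) ^ Fintype.card ι * volume (orthantBall ι r) := by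
        gcongr
        exact ncard_mul_le_volume_orthantBall hc r
    _ = volume (orthantBall ι ρ) := by
        rw [← volume_orthantBall_mul hs, div_mul_cancel₀ _ hr0.ne']
    _ ≤ (dirichletIndices c' (r ^ 2)).ncard * ENNReal.ofReal (∏ j, c' j) := by
        simpa only [ρ, sub_add_cancel] using volume_orthantBall_le_ncard_mul hc' hρ.le
    _ ≤ (dirichletIndices c' (r ^ 2)).ncard * K := by
        gcongr
        exact ENNReal.ofReal_le_ofReal hprod

/-- The `λ₀` of the statement, for codiagonal `d` and volume ratio `q = |R| / |R'|`. -/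
noncomputable def weylThreshold (d q : ℝ) (n : ℕ) : ℝ :=
  d ^ 2 * ((1 - q ^ ((1 : ℝ) / n))⁻¹) ^ 2

lemma lt_and_lt_pow_of_weylThreshold_lt_sq {d q r : ℝ} {n : ℕ} (hn : 0 < n) (hd : 0 ≤ d)
    (hq0 : 0 ≤ q) (hq1 : q < 1) (hr : 0 ≤ r) (h : weylThreshold d q n < r ^ 2) :
    d < r ∧ q < ((r - d) / r) ^ n := by
  set t := q ^ ((1 : ℝ) / n) with ht
  have ht0 : 0 ≤ t := Real.rpow_nonneg hq0 _
  have ht1 : t < 1 := Real.rpow_lt_one hq0 hq1 (by positivity)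
  have hdt : d < (1 - t) * r := by
    rw [weylThreshold, ← mul_pow] at h
    rw [← div_lt_iff₀' (sub_pos.2 ht1)]
    exact lt_of_pow_lt_pow_left₀ 2 hr h
  have hr0 : 0 < r := pos_of_mul_pos_right (hd.trans_lt hdt) (sub_pos.2 ht1).le
  have hts : t < (r - d) / r := by rw [lt_div_iff₀ hr0]; linarith
  have hs0 : 0 ≤ (r - d) / r := ht0.trans hts.le
  refine ⟨by nlinarith, ?_⟩
  rwa [ht, one_div, Real.rpow_inv_lt_iff_of_pos hq0 hs0 (by positivity),
    Real.rpow_natCast] at hts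

lemma prod_div_le_prod_div_mul {κ s : ℝ} (hκ : 0 ≤ κ) {a a' : ι → ℝ} (ha : ∀ j, 0 < a j)
    (ha' : ∀ j, 0 < a' j) (h : (∏ j, a j) / ∏ j, a' j ≤ s ^ Fintype.card ι) :
    ∏ j, κ / a' j ≤ (∏ j, κ / a j) * s ^ Fintype.card ι := by
  have hP : 0 < ∏ j, a j := Finset.prod_pos fun j _ => ha j
  have hP' : 0 < ∏ j, a' j := Finset.prod_pos fun j _ => ha' j
  simp only [Finset.prod_div_distrib, Finset.prod_const, Finset.card_univ]
  calc κ ^ Fintype.card ι / ∏ j, a' j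
      = κ ^ Fintype.card ι / (∏ j, a j) * ((∏ j, a j) / ∏ j, a' j) := by
        field_simp
    _ ≤ κ ^ Fintype.card ι / (∏ j, a j) * s ^ Fintype.card ι := by gcongr

end DirichletBox

open DirichletBox in
theorem stmt13_general (n : ℕ) (hn : 1 ≤ n) (a a' : Fin n → ℝ)
    (ha : ∀ j, 0 < a j) (ha' : ∀ j, 0 < a' j)
    (hvol : ∏ j, a j < ∏ j, a' j)
    (d' : ℝ) (hd'0 : 0 ≤ d')
    (hd' : d' ^ 2 = ∑ j, Real.pi ^ 2 / a' j ^ 2)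
    (lam0 : ℝ)
    (hlam0 : lam0 = d' ^ 2 * ((1 - ((∏ j, a j) / ∏ j, a' j) ^ ((1 : ℝ) / n))⁻¹) ^ 2)
    (lam : ℝ) (hlam : lam0 < lam) :
    Nat.card {i : Fin n → ℕ //
        (∀ j, 1 ≤ i j) ∧ ∑ j, ((i j : ℝ) * Real.pi / a j) ^ 2 ≤ lam}
      ≤ Nat.card {i : Fin n → ℕ //
        (∀ j, 1 ≤ i j) ∧ ∑ j, ((i j : ℝ) * Real.pi / a' j) ^ 2 ≤ lam} := by
  set q := (∏ j, a j) / ∏ j, a' j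
  have hP' : 0 < ∏ j, a' j := Finset.prod_pos fun j _ => ha' j
  have hq : 0 < q := div_pos (Finset.prod_pos fun j _ => ha j) hP'
  obtain ⟨r, hr, rfl⟩ : ∃ r, 0 ≤ r ∧ r ^ 2 = lam :=
    ⟨√lam, Real.sqrt_nonneg _, Real.sq_sqrt ((by rw [hlam0]; positivity : 0 ≤ lam0).trans hlam.le)⟩
  obtain ⟨hd'r, hvolume_ratio⟩ := lt_and_lt_pow_of_weylThreshold_lt_sq hn hd'0 hq.le
    ((div_lt_one hP').2 hvol) hr (by rwa [hlam0] at hlam)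
  have hcodiag : ‖(WithLp.toLp 2 (fun j => Real.pi / a' j) : EuclideanSpace ℝ (Fin n))‖ = d' := by
    rw [← sq_eq_sq₀ (norm_nonneg _) hd'0, EuclideanSpace.norm_sq_eq, hd']
    simp [div_pow]
  have hprod := prod_div_le_prod_div_mul Real.pi_pos.le ha ha'
    (s := (r - d') / r) (by simpa only [Fintype.card_fin] using hvolume_ratio.le)
  rw [← hcodiag] at hd'r hprod
  have key := ncard_dirichletIndices_le_of_prod_le (fun j => div_pos Real.pi_pos (ha j))
    (fun j => div_pos Real.pi_pos (ha' j)) hd'r hprod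
  simp_rw [mul_div_assoc]
  rwa [← Nat.card_coe_set_eq, ← Nat.card_coe_set_eq] at key

/-- Eventual Dirichlet subspectrality of a larger-volume box to a
smaller-volume box, beyond the explicit threshold `λ₀`. -/
theorem stmt13 (n : ℕ) (hn : 1 ≤ n) (a a' : Fin n → ℝ)
    (ha : ∀ j, 0 < a j) (ha' : ∀ j, 0 < a' j)
    (hvol : ∏ j, a j < ∏ j, a' j)
    (d d' : ℝ) (hd0 : 0 ≤ d) (hd'0 : 0 ≤ d')
    (hd : d ^ 2 = ∑ j, Real.pi ^ 2 / a j ^ 2)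
    (hd' : d' ^ 2 = ∑ j, Real.pi ^ 2 / a' j ^ 2)
    (lam0 : ℝ)
    (hlam0 : lam0 = d' ^ 2 * ((1 - ((∏ j, a j) / ∏ j, a' j) ^ ((1 : ℝ) / n))⁻¹) ^ 2)
    (lam : ℝ) (hlam : lam0 < lam) :
    Nat.card {i : Fin n → ℕ //
        (∀ j, 1 ≤ i j) ∧ ∑ j, ((i j : ℝ) * Real.pi / a j) ^ 2 ≤ lam}
      ≤ Nat.card {i : Fin n → ℕ //
        (∀ j, 1 ≤ i j) ∧ ∑ j, ((i j : ℝ) * Real.pi / a' j) ^ 2 ≤ lam} :=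
  stmt13_general n hn a a' ha ha' hvol d' hd'0 hd' lam0 hlam0 lam hlam
end

section
/- Let $(\lambda_k)$ and $(\mu_k)$ be nondecreasing sequences of nonnegative reals tending to infinity with $\lambda_k \le \mu_k$ for all $k$ in some set $I$ of upper natural density $1$, and suppose additionally that both sequences satisfy Weyl asymptotics $N_\lambda(x) \sim c x^{n/2}$, $N_\mu(x) \sim c' x^{n/2}$ with positive constants as $x \to \infty$. Then $c \ge c'$. -/
open Filter Asymptotics Topology

/-!
If `l ≤ m` on `I`, then `#(I ∩ [0, N)) ≤ N_l(m (N - 1))`, while monotonicity of `m` gives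
`N_m(m (N - 1) - 1) + 1 ≤ N`. Hence the density of `I` up to `N` is at most
`N_l(y) / (N_m(y - 1) + 1)` with `y = m (N - 1) → ∞`, and by the Weyl asymptotics this ratio
tends to `c / c'` (the shift by `1` and the `+ 1` are invisible at the scale `y ^ (n / 2)`).
Upper density `1` therefore forces `1 ≤ c / c'`.
-/

theorem Set.finite_setOf_le_of_tendsto_atTop {f : ℕ → ℝ} (hf : Tendsto f atTop atTop)
    (x : ℝ) : {k | f k ≤ x}.Finite := by
  simpa [← Nat.cofinite_eq_atTop, eventually_cofinite] using hf.eventually_gt_atTop x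

theorem Monotone.card_setOf_le_le_of_lt {m : ℕ → ℝ} (hm : Monotone m) {x : ℝ} {N : ℕ}
    (hx : x < m N) : Nat.card {k | m k ≤ x} ≤ N := by
  have hsub : {k | m k ≤ x} ⊆ Set.Iio N := fun k hk =>
    lt_of_not_ge fun hNk => (hx.trans_le (hm hNk)).not_ge hk
  simpa using Nat.card_mono (Set.finite_Iio N) hsub

theorem Monotone.card_inter_Iio_le_card_setOf_le {l m : ℕ → ℝ} (hm : Monotone m)
    {I : Set ℕ} {N : ℕ} (hdom : ∀ k ∈ I, l k ≤ m k) (hfin : {k | l k ≤ m N}.Finite) :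
    Nat.card ↥(I ∩ Set.Iio (N + 1)) ≤ Nat.card {k | l k ≤ m N} :=
  Nat.card_mono hfin fun k ⟨hkI, hkN⟩ => (hdom k hkI).trans (hm (Nat.lt_succ_iff.mp hkN))

theorem Monotone.card_inter_Iio_div_le {l m : ℕ → ℝ} (hm : Monotone m)
    {I : Set ℕ} {N : ℕ} (hdom : ∀ k ∈ I, l k ≤ m k) (hfin : {k | l k ≤ m N}.Finite) :
    (Nat.card ↥(I ∩ Set.Iio (N + 1)) : ℝ) / ↑(N + 1) ≤
      Nat.card {k | l k ≤ m N} / (Nat.card {k | m k ≤ m N - 1} + 1) := by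
  have hlt : (Nat.card {k | m k ≤ m N - 1} : ℝ) + 1 ≤ ↑(N + 1) := by
    exact_mod_cast Nat.succ_le_succ (hm.card_setOf_le_le_of_lt (sub_one_lt (m N)))
  gcongr
  exact_mod_cast hm.card_inter_Iio_le_card_setOf_le hdom hfin

theorem isEquivalent_rpow_sub_const (a q : ℝ) :
    (fun x : ℝ => (x - a) ^ q) ~[atTop] fun x => x ^ q := by
  refine isEquivalent_of_tendsto_one ?_
  have hbase : Tendsto (fun x : ℝ => 1 - a * x⁻¹) atTop (𝓝 1) := by
    simpa using tendsto_inv_atTop_zero.const_mul a |>.const_sub 1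
  have hpow : Tendsto (fun x : ℝ => (1 - a * x⁻¹) ^ q) atTop (𝓝 1) := by
    simpa using hbase.rpow_const (p := q) (Or.inl one_ne_zero)
  refine hpow.congr' ?_
  filter_upwards [eventually_gt_atTop a, eventually_gt_atTop 0] with x hxa hx0
  rw [Pi.div_apply, ← Real.div_rpow (by linarith) hx0.le]
  congr 1
  field_simp

theorem tendsto_div_comp_sub_one_add_one {f g : ℝ → ℝ} {c c' q : ℝ} (hq : 0 < q)
    (hc' : 0 < c') (hf : f ~[atTop] fun x => c * x ^ q) (hg : g ~[atTop] fun x => c' * x ^ q) :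
    Tendsto (fun x => f x / (g (x - 1) + 1)) atTop (𝓝 (c / c')) := by
  have hg_shift : (fun x => g (x - 1)) ~[atTop] fun x => c' * x ^ q :=
    (hg.comp_tendsto (tendsto_atTop_add_const_right _ (-1) tendsto_id)).trans
      (IsEquivalent.refl.mul (isEquivalent_rpow_sub_const 1 q))
  have hone : (fun _ => (1 : ℝ)) =o[atTop] fun x => c' * x ^ q := by
    rw [isLittleO_one_left_iff]
    exact tendsto_norm_atTop_atTop.comp ((tendsto_rpow_atTop hq).const_mul_atTop hc')
  have hmodel : Tendsto ((fun x => c * x ^ q) / fun x => c' * x ^ q) atTop (𝓝 (c / c')) := by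
    refine tendsto_const_nhds.congr' ?_
    filter_upwards [eventually_gt_atTop 0] with x hx
    have : x ^ q ≠ 0 := (Real.rpow_pos_of_pos hx q).ne'
    simp only [Pi.div_apply]
    field_simp
  exact (hf.div (hg_shift.add_isLittleO hone)).symm.tendsto_nhds hmodel

theorem limsup_le_of_eventually_le_of_tendsto {u v : ℕ → ℝ} {a : ℝ} (hu : 0 ≤ u)
    (huv : u ≤ᶠ[atTop] v) (hv : Tendsto v atTop (𝓝 a)) : limsup u atTop ≤ a := by
  rw [← hv.limsup_eq]
  exact limsup_le_limsup huv (isBoundedUnder_of ⟨0, hu⟩).isCoboundedUnder_le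
    hv.isBoundedUnder_le

theorem stmt16_general (n : ℕ) (hn : 1 ≤ n) (l m : ℕ → ℝ)
    (hm : Monotone m)
    (hllim : Tendsto l atTop atTop) (hmlim : Tendsto m atTop atTop)
    (I : Set ℕ)
    (hI : Filter.limsup (fun N : ℕ => (Nat.card ↥(I ∩ Set.Iio N) : ℝ) / N) atTop = 1)
    (hdom : ∀ k ∈ I, l k ≤ m k)
    (c c' : ℝ) (hc' : 0 < c')
    (hW : Tendsto (fun x : ℝ =>
      (Nat.card {k : ℕ | l k ≤ x} : ℝ) / (c * x ^ ((n : ℝ) / 2)))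
      atTop (nhds 1))
    (hW' : Tendsto (fun x : ℝ =>
      (Nat.card {k : ℕ | m k ≤ x} : ℝ) / (c' * x ^ ((n : ℝ) / 2)))
      atTop (nhds 1)) :
    c' ≤ c := by
  have hq : 0 < (n : ℝ) / 2 := div_pos (Nat.cast_pos.mpr hn) two_pos
  have hratio := tendsto_div_comp_sub_one_add_one hq hc'
    (isEquivalent_of_tendsto_one hW) (isEquivalent_of_tendsto_one hW')
  have hbound : ∀ᶠ N in atTop, (Nat.card ↥(I ∩ Set.Iio N) : ℝ) / N ≤
      Nat.card {k | l k ≤ m (N - 1)} / (Nat.card {k | m k ≤ m (N - 1) - 1} + 1) := by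
    filter_upwards [eventually_ne_atTop 0] with N hN
    obtain ⟨M, rfl⟩ := Nat.exists_eq_succ_of_ne_zero hN
    exact hm.card_inter_Iio_div_le hdom (Set.finite_setOf_le_of_tendsto_atTop hllim _)
  have hdensity := limsup_le_of_eventually_le_of_tendsto (fun N => by positivity) hbound
    (hratio.comp (hmlim.comp (tendsto_sub_atTop_nat 1)))
  rwa [hI, le_div_iff₀ hc', one_mul] at hdensity

/-- Eigenvalue domination on a density-one set of indices, together with Weyl
asymptotics for both counting functions, forces the Weyl coefficients to be
comparable. -/
theorem stmt16 (n : ℕ) (hn : 1 ≤ n) (l m : ℕ → ℝ)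
    (hl : Monotone l) (hm : Monotone m) (hl0 : ∀ k, 0 ≤ l k) (hm0 : ∀ k, 0 ≤ m k)
    (hllim : Tendsto l atTop atTop) (hmlim : Tendsto m atTop atTop)
    (I : Set ℕ)
    (hI : Filter.limsup (fun N : ℕ => (Nat.card ↥(I ∩ Set.Iio N) : ℝ) / N) atTop = 1)
    (hdom : ∀ k ∈ I, l k ≤ m k)
    (c c' : ℝ) (hc : 0 < c) (hc' : 0 < c')
    (hW : Tendsto (fun x : ℝ =>
      (Nat.card {k : ℕ | l k ≤ x} : ℝ) / (c * x ^ ((n : ℝ) / 2)))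
      atTop (nhds 1))
    (hW' : Tendsto (fun x : ℝ =>
      (Nat.card {k : ℕ | m k ≤ x} : ℝ) / (c' * x ^ ((n : ℝ) / 2)))
      atTop (nhds 1)) :
    c' ≤ c :=
  stmt16_general n hn l m hm hllim hmlim I hI hdom c c' hc' hW hW'
end

section
/- Let $\Lambda_1, \Lambda_2$ be full-rank lattices in $\mathbb{R}^n$ with equal covolumes $|\Lambda_1| = |\Lambda_2|$, and suppose that for all $t > 0$, $\sum_{k \in \Lambda_1^*} e^{-|k|^2 t} \le \sum_{k \in \Lambda_2^*} e^{-|k|^2 t}$, where $\Lambda^*$ denotes the dual lattice. Then, assuming the Jacobi theta identity $\sum_{k\in\Lambda^*} e^{-|k|^2 t} = \frac{|\Lambda|}{(4\pi t)^{n/2}} \sum_{\ell\in\Lambda} e^{-|\ell|^2/4t}$, the shortest nonzero vector of $\Lambda_1$ is at least as long as the shortest nonzero vector of $\Lambda_2$. -/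
/-!
After the substitution `t = 1 / (4 s)`, the Jacobi identities and the equality of covolumes turn
the domination of the dual theta series into `θ_{Λ₁}(s) ≤ θ_{Λ₂}(s)` for the lattices themselves,
where `θ_Λ(s) = ∑_{ℓ ∈ Λ} exp (-|ℓ|² s)`. As `s → ∞`, `θ_Λ(s) - 1` decays like `exp (-λ² s)`
with `λ` the systole of `Λ`: a vector `v ≠ 0` of `Λ₁` gives `θ_{Λ₁}(s) ≥ 1 + exp (-|v|² s)`, while
`θ_{Λ₂}(s) ≤ 1 + exp (-λ₂² (s - 1)) θ_{Λ₂}(1)`. Comparing the decay rates yields `λ₂ ≤ |v|`.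
-/

open scoped RealInnerProductSpace Nat
open Real Filter

theorem Real.exp_neg_le_factorial_div_pow {y : ℝ} (hy : 0 < y) (k : ℕ) :
    exp (-y) ≤ k ! / y ^ k := by
  rw [exp_neg, inv_le_comm₀ (exp_pos y) (by positivity), inv_div]
  exact Real.pow_div_factorial_le_exp _ hy.le k

theorem le_of_forall_exp_neg_mul_le {a b K : ℝ}
    (h : ∀ s ≥ 1, exp (-(a * s)) ≤ K * exp (-(b * s))) : b ≤ a := by
  by_contra! hab
  have hgrow : Tendsto (fun s => exp ((b - a) * s)) atTop atTop :=
    tendsto_exp_atTop.comp (tendsto_id.const_mul_atTop (sub_pos.2 hab))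
  obtain ⟨s, hs1, hsK⟩ := ((eventually_ge_atTop 1).and (hgrow.eventually_gt_atTop K)).exists
  have := h s hs1
  rw [show (b - a) * s = -(a * s) - -(b * s) by ring, exp_sub, lt_div_iff₀ (exp_pos _)] at hsK
  linarith

namespace ZLattice

variable {E : Type*} [NormedAddCommGroup E]

noncomputable def systole (L : Submodule ℤ E) : ℝ :=
  sInf {r : ℝ | ∃ l ∈ L, l ≠ 0 ∧ ‖l‖ = r}

theorem systole_nonneg (L : Submodule ℤ E) : 0 ≤ systole L :=
  Real.sInf_nonneg (by rintro _ ⟨l, -, -, rfl⟩; exact norm_nonneg l)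

theorem systole_le_norm {L : Submodule ℤ E} {l : E} (hl : l ∈ L) (hl0 : l ≠ 0) :
    systole L ≤ ‖l‖ :=
  csInf_le ⟨0, by rintro _ ⟨l, -, -, rfl⟩; exact norm_nonneg l⟩ ⟨l, hl, hl0, rfl⟩

theorem le_systole {L : Submodule ℤ E} [Nontrivial L] {r : ℝ}
    (h : ∀ l ∈ L, l ≠ 0 → r ≤ ‖l‖) : r ≤ systole L := by
  obtain ⟨v, hv⟩ := exists_ne (0 : L)
  refine le_csInf ⟨‖(v : E)‖, v, v.2, by simpa using hv, rfl⟩ ?_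
  rintro _ ⟨l, hl, hl0, rfl⟩
  exact h l hl hl0

theorem nontrivial [NormedSpace ℝ E] [FiniteDimensional ℝ E] [Nontrivial E]
    (L : Submodule ℤ E) [DiscreteTopology L] [IsZLattice ℝ L] : Nontrivial L :=
  Module.nontrivial_of_finrank_pos <| (ZLattice.rank ℝ L).symm ▸ Module.finrank_pos

noncomputable def theta (L : Submodule ℤ E) (s : ℝ) : ℝ :=
  ∑' l : L, exp (-‖(l : E)‖ ^ 2 * s)

section Theta

variable [NormedSpace ℝ E] [FiniteDimensional ℝ E]

theorem summable_theta (L : Submodule ℤ E) [DiscreteTopology L] {s : ℝ} (hs : 0 < s) :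
    Summable fun l : L => exp (-‖(l : E)‖ ^ 2 * s) := by
  set k := Module.finrank ℤ L + 1
  refine Summable.of_norm_bounded_eventually
    ((summable_norm_pow_inv L (2 * k) (by omega)).mul_left (k ! / s ^ k)) ?_
  filter_upwards [eventually_cofinite_ne 0] with l hl
  have hl' : 0 < ‖(l : E)‖ := norm_pos_iff.2 (by simpa using hl)
  rw [norm_of_nonneg (exp_pos _).le, neg_mul]
  calc exp (-(‖(l : E)‖ ^ 2 * s)) ≤ k ! / (‖(l : E)‖ ^ 2 * s) ^ k :=
        exp_neg_le_factorial_div_pow (by positivity) k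
    _ = k ! / s ^ k * ‖(l : E)‖⁻¹ ^ (2 * k) := by
        rw [mul_pow, ← pow_mul, inv_pow]; field_simp

variable {L : Submodule ℤ E} [DiscreteTopology L]

theorem one_add_exp_le_theta {v : E} (hv : v ∈ L) (hv0 : v ≠ 0) {s : ℝ} (hs : 0 < s) :
    1 + exp (-‖v‖ ^ 2 * s) ≤ theta L s := by
  classical
  have hne : (0 : L) ≠ ⟨v, hv⟩ := fun h => hv0 (congrArg Subtype.val h).symm
  have := (summable_theta L hs).sum_le_tsum {0, ⟨v, hv⟩} (fun _ _ => (exp_pos _).le)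
  simpa [theta, Finset.sum_pair hne] using this

theorem theta_le_one_add {μ : ℝ} (hμ : ∀ l ∈ L, l ≠ 0 → μ ≤ ‖l‖ ^ 2) {s : ℝ} (hs : 1 ≤ s) :
    theta L s ≤ 1 + exp (-(μ * (s - 1))) * theta L 1 := by
  classical
  have hterm : ∀ l : L, exp (-‖(l : E)‖ ^ 2 * s)
      ≤ (if l = 0 then 1 else 0) + exp (-(μ * (s - 1))) * exp (-‖(l : E)‖ ^ 2 * 1) := by
    intro l
    split_ifs with hl
    · simp [hl, (exp_pos _).le]
    · rw [zero_add, ← exp_add, exp_le_exp]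
      have := hμ l l.2 (by simpa using hl)
      nlinarith
  calc theta L s
      ≤ ∑' l : L, ((if l = 0 then 1 else 0) + exp (-(μ * (s - 1))) * exp (-‖(l : E)‖ ^ 2 * 1)) :=
        (summable_theta L (by linarith)).tsum_le_tsum hterm
          ((hasSum_ite_eq 0 1).summable.add ((summable_theta L one_pos).mul_left _))
    _ = 1 + exp (-(μ * (s - 1))) * theta L 1 := by
        rw [(hasSum_ite_eq 0 1).summable.tsum_add ((summable_theta L one_pos).mul_left _),
          tsum_ite_eq, tsum_mul_left, theta]

theorem sq_le_norm_sq_of_theta_le {L₁ L₂ : Submodule ℤ E}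
    [DiscreteTopology L₁] [DiscreteTopology L₂]
    (h : ∀ s ≥ 1, theta L₁ s ≤ theta L₂ s) {μ : ℝ} (hμ : ∀ l ∈ L₂, l ≠ 0 → μ ≤ ‖l‖ ^ 2)
    {v : E} (hv : v ∈ L₁) (hv0 : v ≠ 0) : μ ≤ ‖v‖ ^ 2 := by
  refine le_of_forall_exp_neg_mul_le (K := exp μ * theta L₂ 1) fun s hs => ?_
  have hchain := (one_add_exp_le_theta hv hv0 (by linarith)).trans
    ((h s hs).trans (theta_le_one_add hμ hs))
  rw [show -(μ * (s - 1)) = μ + -(μ * s) by ring, exp_add] at hchain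
  rw [← neg_mul]
  linarith

theorem systole_le_systole_of_theta_le [Nontrivial E] {L₁ L₂ : Submodule ℤ E}
    [DiscreteTopology L₁] [DiscreteTopology L₂] [IsZLattice ℝ L₁]
    (h : ∀ s ≥ 1, theta L₁ s ≤ theta L₂ s) : systole L₂ ≤ systole L₁ := by
  have := ZLattice.nontrivial L₁
  refine le_systole fun v hv hv0 => ?_
  have hμ : ∀ l ∈ L₂, l ≠ 0 → systole L₂ ^ 2 ≤ ‖l‖ ^ 2 := fun l hl hl0 =>
    pow_le_pow_left₀ (systole_nonneg L₂) (systole_le_norm hl hl0) 2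
  exact (pow_le_pow_iff_left₀ (systole_nonneg L₂) (norm_nonneg v) two_ne_zero).1
    (sq_le_norm_sq_of_theta_le h hμ hv hv0)

end Theta

end ZLattice

theorem stmt19_general (n : ℕ) (hn : 1 ≤ n)
    (L1 L2 : Submodule ℤ (EuclideanSpace ℝ (Fin n)))
    [DiscreteTopology L1] [DiscreteTopology L2]
    [IsZLattice ℝ L1] [IsZLattice ℝ L2]
    (hcov : ZLattice.covolume L1 = ZLattice.covolume L2)
    (D1 D2 : Set (EuclideanSpace ℝ (Fin n)))
    (hjac1 : ∀ t : ℝ, 0 < t →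
      (∑' k : D1, Real.exp (-‖(k : EuclideanSpace ℝ (Fin n))‖ ^ 2 * t))
        = ZLattice.covolume L1 / (4 * Real.pi * t) ^ ((n : ℝ) / 2)
          * ∑' l : L1, Real.exp (-‖(l : EuclideanSpace ℝ (Fin n))‖ ^ 2 / (4 * t)))
    (hjac2 : ∀ t : ℝ, 0 < t →
      (∑' k : D2, Real.exp (-‖(k : EuclideanSpace ℝ (Fin n))‖ ^ 2 * t))
        = ZLattice.covolume L2 / (4 * Real.pi * t) ^ ((n : ℝ) / 2)
          * ∑' l : L2, Real.exp (-‖(l : EuclideanSpace ℝ (Fin n))‖ ^ 2 / (4 * t)))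
    (hdom : ∀ t : ℝ, 0 < t →
      (∑' k : D1, Real.exp (-‖(k : EuclideanSpace ℝ (Fin n))‖ ^ 2 * t))
        ≤ ∑' k : D2, Real.exp (-‖(k : EuclideanSpace ℝ (Fin n))‖ ^ 2 * t)) :
    sInf {r : ℝ | ∃ l ∈ L2, l ≠ 0 ∧ ‖l‖ = r}
      ≤ sInf {r : ℝ | ∃ l ∈ L1, l ≠ 0 ∧ ‖l‖ = r} := by
  have : Nontrivial (EuclideanSpace ℝ (Fin n)) := by
    have : Nonempty (Fin n) := ⟨⟨0, hn⟩⟩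
    infer_instance
  refine ZLattice.systole_le_systole_of_theta_le fun s hs => ?_
  have ht : 0 < 1 / (4 * s) := by positivity
  have hpos : 0 < (4 * π * (1 / (4 * s))) ^ ((n : ℝ) / 2) := by positivity
  have hdual := hdom _ ht
  rw [hjac1 _ ht, hjac2 _ ht, hcov] at hdual
  have hscale : 4 * (1 / (4 * s)) = s⁻¹ := by field_simp
  simp only [hscale, div_inv_eq_mul] at hdual
  exact (mul_le_mul_iff_right₀ (div_pos (ZLattice.covolume_pos L2) hpos)).1 hdual

/-- If two isovolumetric lattices satisfy the Jacobi theta identity and the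
dual theta series of the first is dominated by that of the second, then the
systole of the first lattice is at least that of the second. -/
theorem stmt19 (n : ℕ) (hn : 1 ≤ n)
    (L1 L2 : Submodule ℤ (EuclideanSpace ℝ (Fin n)))
    [DiscreteTopology L1] [DiscreteTopology L2]
    [IsZLattice ℝ L1] [IsZLattice ℝ L2]
    (hcov : ZLattice.covolume L1 = ZLattice.covolume L2)
    (D1 D2 : Set (EuclideanSpace ℝ (Fin n)))
    (hD1 : D1 = {k | ∀ l ∈ L1, ∃ m : ℤ, ⟪k, l⟫ = (m : ℝ)})
    (hD2 : D2 = {k | ∀ l ∈ L2, ∃ m : ℤ, ⟪k, l⟫ = (m : ℝ)})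
    (hjac1 : ∀ t : ℝ, 0 < t →
      (∑' k : D1, Real.exp (-‖(k : EuclideanSpace ℝ (Fin n))‖ ^ 2 * t))
        = ZLattice.covolume L1 / (4 * Real.pi * t) ^ ((n : ℝ) / 2)
          * ∑' l : L1, Real.exp (-‖(l : EuclideanSpace ℝ (Fin n))‖ ^ 2 / (4 * t)))
    (hjac2 : ∀ t : ℝ, 0 < t →
      (∑' k : D2, Real.exp (-‖(k : EuclideanSpace ℝ (Fin n))‖ ^ 2 * t))
        = ZLattice.covolume L2 / (4 * Real.pi * t) ^ ((n : ℝ) / 2)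
          * ∑' l : L2, Real.exp (-‖(l : EuclideanSpace ℝ (Fin n))‖ ^ 2 / (4 * t)))
    (hdom : ∀ t : ℝ, 0 < t →
      (∑' k : D1, Real.exp (-‖(k : EuclideanSpace ℝ (Fin n))‖ ^ 2 * t))
        ≤ ∑' k : D2, Real.exp (-‖(k : EuclideanSpace ℝ (Fin n))‖ ^ 2 * t)) :
    sInf {r : ℝ | ∃ l ∈ L2, l ≠ 0 ∧ ‖l‖ = r}
      ≤ sInf {r : ℝ | ∃ l ∈ L1, l ≠ 0 ∧ ‖l‖ = r} :=
  stmt19_general n hn L1 L2 hcov D1 D2 hjac1 hjac2 hdom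
end
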